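/- Let N ≥ 2 and β : ℝ. For the star graph with hub node 0 and homogeneous infection rate, i.e. b k l = β if k ≠ l and (k = 0 or l = 0), and b k l = 0 otherwise, the characteristic polynomial of the SI infinitesimal generator Q equals ∏_{k=0}^{N−1} (X + β·k)^{2·C(N−1,k)}, where C(N−1,k) is the binomial coefficient. That is, the eigenvalue −β·k occurs with algebraic multiplicity 2·C(N−1,k) for each 0 ≤ k ≤ N−1. -/

import Mathlib

/-- The infinitesimal generator of the Markovian SI process with weighted
infection rates `b`, indexed by the set of infected nodes: the entry `Q S T`
equals `∑_{k ∈ S} b k m` if `T = S ∪ {m}` for some `m ∉ S` (equivalently,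
`S ⊆ T` and `T \ S` is a singleton `{m}`), the diagonal entry is
`−∑_{m ∉ S} ∑_{k ∈ S} b k m`, and all other entries are `0`. -/
noncomputable def SIgen (N : ℕ) (b : Fin N → Fin N → ℝ) :
    Matrix (Finset (Fin N)) (Finset (Fin N)) ℝ := fun S T =>
  if T = S then -∑ m ∈ Sᶜ, ∑ k ∈ S, b k m
  else if S ⊆ T ∧ (T \ S).card = 1 then ∑ m ∈ T \ S, ∑ k ∈ S, b k m
  else 0

/-- The weight of the S–I cut set of the configuration with infected set `S`. -/
noncomputable def SIcut (N : ℕ) (b : Fin N → Fin N → ℝ) (S : Finset (Fin N)) : ℝ :=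
  ∑ k ∈ S, ∑ l ∈ Sᶜ, b k l

/-!
Adding an infected node only enlarges the infected set, so `Q S T ≠ 0` forces `S ⊆ T`: the
generator is triangular for any linear extension of inclusion, and its characteristic polynomial
is `∏_S (X + cut S)`. The cut weight is invariant under complementation, so the product is the
square of the product over the sets avoiding the hub; for those the cut consists of the edges
from each infected leaf to the hub, of total weight `β · #S`, and grouping by `#S` gives the
binomial exponents.
-/

open Finset Polynomial

theorem Matrix.charpoly_eq_prod_of_apply_ne_zero_le {R n : Type*} [CommRing R] [Fintype n]
    [DecidableEq n] [PartialOrder n] (M : Matrix n n R) (hM : ∀ i j, M i j ≠ 0 → i ≤ j) :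
    M.charpoly = ∏ i, (X - C (M i i)) := by
  let e : n ≃ LinearExtension n := Equiv.refl _
  let : Fintype (LinearExtension n) := Fintype.ofEquiv n e
  rw [← M.charpoly_reindex e, charpoly_of_isUpperTriangular]
  · exact Fintype.prod_equiv e.symm _ _ fun _ => rfl
  · intro i j hji
    by_contra hne
    have hij : toLinearExtension (e.symm i) ≤ toLinearExtension (e.symm j) :=
      toLinearExtension.monotone (hM _ _ hne)
    exact hji.not_ge hij

theorem Finset.prod_univ_eq_sq_of_compl {α β : Type*} [Fintype α] [DecidableEq α]
    [CommMonoid β] (a : α) (f : Finset α → β) (hf : ∀ S, f Sᶜ = f S) :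
    ∏ S, f S = (∏ S ∈ ({a}ᶜ : Finset α).powerset, f S) ^ 2 := by
  have hpow : ({a}ᶜ : Finset α).powerset = univ.filter (a ∉ ·) := by
    ext S; simp [subset_compl_singleton]
  rw [← prod_filter_mul_prod_filter_not univ (a ∈ ·), hpow, sq]
  congr 1
  exact prod_nbij' compl compl (by simp) (by simp) (by simp) (by simp) (fun S _ => (hf S).symm)

theorem Finset.prod_powerset_card {α β : Type*} [CommMonoid β] (s : Finset α) (f : ℕ → β) :
    ∏ S ∈ s.powerset, f #S = ∏ j ∈ range (#s + 1), f j ^ (#s).choose j := by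
  rw [prod_powerset]
  exact prod_congr rfl fun j _ => prod_powersetCard j s f

variable {N : ℕ} {b : Fin N → Fin N → ℝ}

theorem SIgen_subset_of_apply_ne_zero {S T : Finset (Fin N)} (h : SIgen N b S T ≠ 0) :
    S ⊆ T := by
  unfold SIgen at h
  split_ifs at h with hTS hST
  · exact hTS.ge
  · exact hST.1
  · exact absurd rfl h

theorem SIgen_apply_self (S : Finset (Fin N)) : SIgen N b S S = -SIcut N b S := by
  rw [SIgen, if_pos rfl, SIcut, sum_comm]

theorem SIgen_charpoly : (SIgen N b).charpoly = ∏ S, (X + C (SIcut N b S)) := by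
  rw [Matrix.charpoly_eq_prod_of_apply_ne_zero_le _ fun S T => SIgen_subset_of_apply_ne_zero]
  simp only [SIgen_apply_self, map_neg, sub_neg_eq_add]

theorem SIcut_compl (hb : ∀ k l, b k l = b l k) (S : Finset (Fin N)) :
    SIcut N b Sᶜ = SIcut N b S := by
  rw [SIcut, SIcut, compl_compl, sum_comm]
  simp only [hb]

theorem SIcut_star_of_hub_notMem {β : ℝ}
    (hb : ∀ k l : Fin N, b k l = if k ≠ l ∧ ((k : ℕ) = 0 ∨ (l : ℕ) = 0) then β else 0)
    (hub : Fin N) (hhub : (hub : ℕ) = 0) {S : Finset (Fin N)} (hS : hub ∉ S) :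
    SIcut N b S = β * #S := by
  have hS0 : ∀ k ∈ S, (k : ℕ) ≠ 0 := fun k hk h => hS (Fin.ext (h.trans hhub.symm) ▸ hk)
  have hrow : ∀ k ∈ S, ∑ l ∈ Sᶜ, b k l = β := by
    intro k hk
    rw [sum_eq_single_of_mem hub (mem_compl.2 hS)]
    · rw [hb, if_pos ⟨fun h => hS (h ▸ hk), Or.inr hhub⟩]
    · intro l _ hlhub
      rw [hb, if_neg]
      rintro ⟨-, h | h⟩
      · exact hS0 k hk h
      · exact hlhub (Fin.ext (h.trans hhub.symm))
  rw [SIcut, sum_congr rfl hrow, sum_const, nsmul_eq_mul, mul_comm]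

/-- for the star graph with hub node 0 and homogeneous infection
rate `β`, the characteristic polynomial of the SI generator is
`∏_{k=0}^{N−1} (X + β·k)^{2·C(N−1,k)}`. -/
theorem stmt11 (N : ℕ) (hN : 2 ≤ N) (β : ℝ)
    (b : Fin N → Fin N → ℝ)
    (hb : ∀ k l : Fin N,
      b k l = if k ≠ l ∧ ((k : ℕ) = 0 ∨ (l : ℕ) = 0) then β else 0) :
    (SIgen N b).charpoly =
      ∏ k ∈ Finset.range N,
        (Polynomial.X + Polynomial.C (β * (k : ℝ))) ^ (2 * (N - 1).choose k) := by
  let hub : Fin N := ⟨0, by omega⟩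
  have hsymm : ∀ k l, b k l = b l k := fun k l => by
    rw [hb, hb]; simp only [ne_comm, or_comm]
  have hcard : #({hub}ᶜ : Finset (Fin N)) = N - 1 := by
    rw [card_compl, card_singleton, Fintype.card_fin]
  rw [SIgen_charpoly, prod_univ_eq_sq_of_compl hub _ fun S => by rw [SIcut_compl hsymm],
    prod_congr rfl fun S hS => by
      rw [SIcut_star_of_hub_notMem hb hub rfl (subset_compl_singleton.1 (mem_powerset.1 hS))],
    prod_powerset_card _ (fun j : ℕ => X + C (β * j)), hcard,
    Nat.sub_add_cancel (by omega : 1 ≤ N), ← prod_pow]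
  exact prod_congr rfl fun j _ => by rw [← pow_mul, Nat.mul_comm]
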